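/- arXiv:2112.04133 — 2 statements merged into one kernel-verified Lean document; each statement's English description precedes it below -/
import Mathlib

section
/- (Derivative of the spatial Godunov–Boillat potential with respect to ũ.) At every state Υ with θ̃ < 0, the gradient of X¹ with respect to the vector variable ũ ∈ ℝ³ is given componentwise, for k = 1, 2, 3, by ∂X¹/∂ũ_k = p̂(θ, ψ(Υ))·δ_{1k} + θ·p̂_ψ(θ, ψ(Υ))·ũ₁ũ_k + θΣ̃_{1k} + θσ̃δ_{1k}. -/
noncomputable section

/-- The extended thermodynamical potential
`ψ(Υ) = ψ̃ + ½θ|ũ|² + ½τ₁‖Σ̃‖² + ½τ₂σ̃² + ½τ₀|q̃|²` with `θ = -1/θ̃`. -/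
def psiVal (τ0 τ1 τ2 : ℝ) (ψt : ℝ) (ut : Fin 3 → ℝ) (θt : ℝ)
    (St : Matrix (Fin 3) (Fin 3) ℝ) (σt : ℝ) (qt : Fin 3 → ℝ) : ℝ :=
  ψt + (1/2) * (-1/θt) * (∑ i, (ut i)^2) + (1/2) * τ1 * (∑ j, ∑ k, (St j k)^2)
    + (1/2) * τ2 * σt^2 + (1/2) * τ0 * (∑ i, (qt i)^2)

/-- The temporal Godunov–Boillat potential `X⁰(Υ) = p̂(θ, ψ(Υ))/θ`, `θ = -1/θ̃`. -/
def X0 (phat : ℝ × ℝ → ℝ) (τ0 τ1 τ2 : ℝ) (ψt : ℝ) (ut : Fin 3 → ℝ) (θt : ℝ)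
    (St : Matrix (Fin 3) (Fin 3) ℝ) (σt : ℝ) (qt : Fin 3 → ℝ) : ℝ :=
  phat (-1/θt, psiVal τ0 τ1 τ2 ψt ut θt St σt qt) / (-1/θt)

/-- The spatial Godunov–Boillat potential
`X¹(Υ) = p̂(θ, ψ(Υ)) ũ₁ + θ((Σ̃ũ)₁ + σ̃ũ₁ + q̃₁)`, `θ = -1/θ̃`. -/
def X1 (phat : ℝ × ℝ → ℝ) (τ0 τ1 τ2 : ℝ) (ψt : ℝ) (ut : Fin 3 → ℝ) (θt : ℝ)
    (St : Matrix (Fin 3) (Fin 3) ℝ) (σt : ℝ) (qt : Fin 3 → ℝ) : ℝ :=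
  phat (-1/θt, psiVal τ0 τ1 τ2 ψt ut θt St σt qt) * ut 0
    + (-1/θt) * ((∑ j, St 0 j * ut j) + σt * ut 0 + qt 0)

/-- Partial derivative `p̂_ψ` of `p̂` with respect to its second slot. -/
def pPsi (phat : ℝ × ℝ → ℝ) (a b : ℝ) : ℝ := deriv (fun s => phat (a, s)) b

/-- Partial derivative `p̂_θ` of `p̂` with respect to its first slot. -/
def pTheta (phat : ℝ × ℝ → ℝ) (a b : ℝ) : ℝ := deriv (fun t => phat (t, b)) a

/-! Along the coordinate line `s ↦ Function.update ũ k s` the potential `ψ` has slope `θ ũ_k`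
(`θ` does not depend on `ũ`), so the chain rule in the second slot of `p̂` and the product rule
with `ũ₁` give the formula; the remaining terms of `X¹` are affine in `ũ`. -/

section CoordinateLine

variable {ι : Type*} [DecidableEq ι] (u : ι → ℝ) (k : ι)

theorem hasDerivAt_update_apply (i : ι) :
    HasDerivAt (fun s => Function.update u k s i) (if i = k then 1 else 0) (u k) := by
  simpa only [Pi.single_apply] using hasDerivAt_pi.1 (hasDerivAt_update u k (u k)) i

theorem hasDerivAt_sum_mul_update [Fintype ι] (a : ι → ℝ) :
    HasDerivAt (fun s => ∑ j, a j * Function.update u k s j) (a k) (u k) := by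
  have h := HasDerivAt.fun_sum fun j (_ : j ∈ Finset.univ) =>
    (hasDerivAt_update_apply u k j).const_mul (a j)
  simpa only [mul_ite, mul_one, mul_zero, Finset.sum_ite_eq', Finset.mem_univ, if_true] using h

theorem hasDerivAt_sum_sq_update [Fintype ι] :
    HasDerivAt (fun s => ∑ i, Function.update u k s i ^ 2) (2 * u k) (u k) := by
  have h := HasDerivAt.fun_sum fun i (_ : i ∈ Finset.univ) =>
    (hasDerivAt_update_apply u k i).fun_pow 2
  refine h.congr_deriv ?_
  simp only [Function.update_eq_self, mul_ite, mul_one, mul_zero, Finset.sum_ite_eq',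
    Finset.mem_univ, if_true]
  norm_num

end CoordinateLine

theorem hasDerivAt_pPsi {phat : ℝ × ℝ → ℝ} {a b : ℝ} (hp : DifferentiableAt ℝ phat (a, b)) :
    HasDerivAt (fun s => phat (a, s)) (pPsi phat a b) b :=
  (hp.comp b ((differentiableAt_const a).prodMk differentiableAt_id)).hasDerivAt

theorem hasDerivAt_psiVal_update (τ0 τ1 τ2 ψt : ℝ) (ut : Fin 3 → ℝ) (θt : ℝ)
    (St : Matrix (Fin 3) (Fin 3) ℝ) (σt : ℝ) (qt : Fin 3 → ℝ) (k : Fin 3) :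
    HasDerivAt (fun s => psiVal τ0 τ1 τ2 ψt (Function.update ut k s) θt St σt qt)
      ((-1/θt) * ut k) (ut k) := by
  have hsq := (hasDerivAt_sum_sq_update ut k).const_mul ((1/2) * (-1/θt))
  unfold psiVal
  exact ((((hsq.const_add ψt).add_const _).add_const _).add_const _).congr_deriv (by ring)

theorem X1_deriv_uTilde_general
    (phat : ℝ × ℝ → ℝ) (hp : ContDiff ℝ 2 phat)
    (τ0 τ1 τ2 : ℝ)
    (ψt : ℝ) (ut : Fin 3 → ℝ) (θt : ℝ) (St : Matrix (Fin 3) (Fin 3) ℝ)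
    (σt : ℝ) (qt : Fin 3 → ℝ) :
    ∀ k : Fin 3,
      HasDerivAt (fun s => X1 phat τ0 τ1 τ2 ψt (Function.update ut k s) θt St σt qt)
        (phat (-1/θt, psiVal τ0 τ1 τ2 ψt ut θt St σt qt)
            * (if (0 : Fin 3) = k then 1 else 0)
          + (-1/θt) * pPsi phat (-1/θt) (psiVal τ0 τ1 τ2 ψt ut θt St σt qt)
            * ut 0 * ut k
          + (-1/θt) * St 0 k
          + (-1/θt) * σt * (if (0 : Fin 3) = k then 1 else 0)) (ut k) := by
  intro k
  have hpsi := hasDerivAt_psiVal_update τ0 τ1 τ2 ψt ut θt St σt qt k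
  have hp_psi : HasDerivAt (fun s => phat (-1/θt, s))
      (pPsi phat (-1/θt) (psiVal τ0 τ1 τ2 ψt ut θt St σt qt))
      (psiVal τ0 τ1 τ2 ψt (Function.update ut k (ut k)) θt St σt qt) := by
    rw [Function.update_eq_self]
    exact hasDerivAt_pPsi ((hp.differentiable (by norm_num)) _)
  have hu0 := hasDerivAt_update_apply ut k 0
  have h := ((hp_psi.comp (ut k) hpsi).mul hu0).add
    ((((hasDerivAt_sum_mul_update ut k (St 0)).add (hu0.const_mul σt)).add_const (qt 0)).const_mul
      (-1/θt))
  refine h.congr_deriv ?_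
  simp only [Function.comp_apply, Function.update_eq_self]
  ring

/-- Derivative of the spatial Godunov–Boillat potential with respect to `ũ`:
componentwise, `∂X¹/∂ũ_k = p̂ δ_{1k} + θ p̂_ψ ũ₁ũ_k + θΣ̃_{1k} + θσ̃δ_{1k}`
at every state with `θ̃ < 0`. -/
theorem X1_deriv_uTilde
    (phat : ℝ × ℝ → ℝ) (hp : ContDiff ℝ 2 phat)
    (τ0 τ1 τ2 : ℝ) (hτ0 : 0 < τ0) (hτ1 : 0 < τ1) (hτ2 : 0 < τ2)
    (ψt : ℝ) (ut : Fin 3 → ℝ) (θt : ℝ) (St : Matrix (Fin 3) (Fin 3) ℝ)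
    (σt : ℝ) (qt : Fin 3 → ℝ) (hθ : θt < 0) :
    ∀ k : Fin 3,
      HasDerivAt (fun s => X1 phat τ0 τ1 τ2 ψt (Function.update ut k s) θt St σt qt)
        (phat (-1/θt, psiVal τ0 τ1 τ2 ψt ut θt St σt qt)
            * (if (0 : Fin 3) = k then 1 else 0)
          + (-1/θt) * pPsi phat (-1/θt) (psiVal τ0 τ1 τ2 ψt ut θt St σt qt)
            * ut 0 * ut k
          + (-1/θt) * St 0 k
          + (-1/θt) * σt * (if (0 : Fin 3) = k then 1 else 0)) (ut k) :=
  X1_deriv_uTilde_general phat hp τ0 τ1 τ2 ψt ut θt St σt qt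

end
end

section
/- (Derivative of the spatial Godunov–Boillat potential with respect to θ̃.) At every state Υ with θ̃ < 0, the partial derivative of X¹ with respect to the scalar variable θ̃ equals θ²·[(p̂_θ(θ, ψ(Υ)) + ½p̂_ψ(θ, ψ(Υ))|ũ|²)·ũ₁ + (Σ̃ũ)₁ + σ̃ũ₁ + q̃₁]. -/
noncomputable section

theorem LinearMap.apply_prod_eq {R M : Type*} [CommSemiring R] [AddCommMonoid M] [Module R M]
    (L : R × R →ₗ[R] M) (v w : R) : L (v, w) = v • L (1, 0) + w • L (0, 1) := by
  rw [← L.map_smul, ← L.map_smul, ← map_add]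
  simp

section PartialDerivatives

variable {𝕜 F : Type*} [NontriviallyNormedField 𝕜] [NormedAddCommGroup F] [NormedSpace 𝕜 F]

theorem hasDerivAt_neg_one_div {x : 𝕜} (hx : x ≠ 0) :
    HasDerivAt (fun s : 𝕜 => -1 / s) ((-1 / x) ^ 2) x := by
  have h := (hasDerivAt_inv hx).const_mul (-1 : 𝕜)
  simp only [← div_eq_mul_inv] at h
  refine h.congr_deriv ?_
  field_simp

theorem hasDerivAt_comp_prodMk {f : 𝕜 × 𝕜 → F} {a b : 𝕜 → 𝕜} {a' b' x : 𝕜}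
    (hf : DifferentiableAt 𝕜 f (a x, b x)) (ha : HasDerivAt a a' x) (hb : HasDerivAt b b' x) :
    HasDerivAt (fun s => f (a s, b s))
      (a' • deriv (fun t => f (t, b x)) (a x) + b' • deriv (fun t => f (a x, t)) (b x)) x := by
  have hF := hf.hasFDerivAt
  have hfst : HasDerivAt (fun t => f (t, b x)) (fderiv 𝕜 f (a x, b x) (1, 0)) (a x) :=
    hF.comp_hasDerivAt (a x) ((hasDerivAt_id _).prodMk (hasDerivAt_const _ _))
  have hsnd : HasDerivAt (fun t => f (a x, t)) (fderiv 𝕜 f (a x, b x) (0, 1)) (b x) :=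
    hF.comp_hasDerivAt (b x) ((hasDerivAt_const _ _).prodMk (hasDerivAt_id _))
  rw [hfst.deriv, hsnd.deriv, ← ContinuousLinearMap.coe_coe, ← LinearMap.apply_prod_eq]
  exact hF.comp_hasDerivAt x (ha.prodMk hb)

end PartialDerivatives

theorem hasDerivAt_psiVal_thetaTilde (τ0 τ1 τ2 ψt : ℝ) (ut : Fin 3 → ℝ) {θt : ℝ}
    (St : Matrix (Fin 3) (Fin 3) ℝ) (σt : ℝ) (qt : Fin 3 → ℝ) (hθ : θt ≠ 0) :
    HasDerivAt (fun s => psiVal τ0 τ1 τ2 ψt ut s St σt qt)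
      ((1 / 2) * (-1 / θt) ^ 2 * ∑ i, (ut i) ^ 2) θt := by
  have h := (((hasDerivAt_neg_one_div hθ).const_mul (1 / 2 : ℝ)).mul_const
    (∑ i, (ut i) ^ 2)).const_add ψt
  exact ((h.add_const _).add_const _).add_const _

theorem X1_deriv_thetaTilde_general
    (phat : ℝ × ℝ → ℝ) (hp : ContDiff ℝ 2 phat)
    (τ0 τ1 τ2 : ℝ)
    (ψt : ℝ) (ut : Fin 3 → ℝ) (θt : ℝ) (St : Matrix (Fin 3) (Fin 3) ℝ)
    (σt : ℝ) (qt : Fin 3 → ℝ) (hθ : θt < 0) :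
    HasDerivAt (fun s => X1 phat τ0 τ1 τ2 ψt ut s St σt qt)
      ((-1/θt)^2 *
        ((pTheta phat (-1/θt) (psiVal τ0 τ1 τ2 ψt ut θt St σt qt)
            + (1/2) * pPsi phat (-1/θt) (psiVal τ0 τ1 τ2 ψt ut θt St σt qt)
                * (∑ i, (ut i)^2)) * ut 0
          + (∑ j, St 0 j * ut j) + σt * ut 0 + qt 0)) θt := by
  have hθt : HasDerivAt (fun s : ℝ => -1 / s) ((-1 / θt) ^ 2) θt :=
    hasDerivAt_neg_one_div hθ.ne
  have hcomp := hasDerivAt_comp_prodMk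
    ((hp.differentiable (by norm_num)).differentiableAt) hθt
    (hasDerivAt_psiVal_thetaTilde τ0 τ1 τ2 ψt ut St σt qt hθ.ne)
  refine ((hcomp.mul_const (ut 0)).add
    (hθt.mul_const ((∑ j, St 0 j * ut j) + σt * ut 0 + qt 0))).congr_deriv ?_
  rw [pTheta, pPsi, smul_eq_mul, smul_eq_mul]
  ring

/-- Derivative of the spatial Godunov–Boillat potential with respect to `θ̃`:
`∂X¹/∂θ̃ = θ²·[(p̂_θ + ½p̂_ψ|ũ|²)ũ₁ + (Σ̃ũ)₁ + σ̃ũ₁ + q̃₁]` at every state with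
`θ̃ < 0`. -/
theorem X1_deriv_thetaTilde
    (phat : ℝ × ℝ → ℝ) (hp : ContDiff ℝ 2 phat)
    (τ0 τ1 τ2 : ℝ) (hτ0 : 0 < τ0) (hτ1 : 0 < τ1) (hτ2 : 0 < τ2)
    (ψt : ℝ) (ut : Fin 3 → ℝ) (θt : ℝ) (St : Matrix (Fin 3) (Fin 3) ℝ)
    (σt : ℝ) (qt : Fin 3 → ℝ) (hθ : θt < 0) :
    HasDerivAt (fun s => X1 phat τ0 τ1 τ2 ψt ut s St σt qt)
      ((-1/θt)^2 *
        ((pTheta phat (-1/θt) (psiVal τ0 τ1 τ2 ψt ut θt St σt qt)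
            + (1/2) * pPsi phat (-1/θt) (psiVal τ0 τ1 τ2 ψt ut θt St σt qt)
                * (∑ i, (ut i)^2)) * ut 0
          + (∑ j, St 0 j * ut j) + σt * ut 0 + qt 0)) θt :=
  X1_deriv_thetaTilde_general phat hp τ0 τ1 τ2 ψt ut θt St σt qt hθ
end
end
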